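/- arXiv:1506.04313 — 2 statements merged into one kernel-verified Lean document; each statement's English description precedes it below -/
import Mathlib

section
/- If X = (X1, X2) is uniformly distributed on the closed unit disk in R^2 and φ(θ) = E[exp(i θ·X)] is its characteristic function, then |φ(θ)| ≤ (4/π)·min(1/|θ1|, 1/|θ2|) for all θ = (θ1, θ2) with θ1 ≠ 0 and θ2 ≠ 0. -/
open MeasureTheory

/-- The uniform probability measure on the closed unit disk in `ℝ²`. -/
noncomputable def unifDisk : Measure (EuclideanSpace ℝ (Fin 2)) :=
  (ENNReal.ofReal Real.pi)⁻¹ •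
    (volume.restrict (Metric.closedBall (0 : EuclideanSpace ℝ (Fin 2)) 1))

/-- The characteristic function `φ(θ) = E[exp(i θ·X)]` of a random vector `X`
uniformly distributed on the closed unit disk. -/
noncomputable def charFunDisk (θ : EuclideanSpace ℝ (Fin 2)) : ℂ :=
  ∫ x, Complex.exp (Complex.I * ((θ 0 * x 0 + θ 1 * x 1 : ℝ) : ℂ)) ∂unifDisk

/-!
Integrate along vertical lines first. Each slice of the disk is an interval `[a, b]`, and
`∫ y in a..b, exp (i d y) = (exp (i d b) - exp (i d a)) / (i d)` has modulus at most `2 / |d|`;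
the factor `exp (i c x)` has modulus one and the slices lie over `[-1, 1]`, so the integral over
the disk has modulus at most `4 / |d|`, and dividing by the area `π` gives the bound in `θ 1`.
The bound in `θ 0` follows from the symmetry `(x, y) ↦ (y, x)` of the disk.
-/

open Set Complex

theorem setIntegral_prod_eq_integral_setIntegral_preimage {α β E : Type*} [MeasurableSpace α]
    [MeasurableSpace β] [NormedAddCommGroup E] [NormedSpace ℝ E] {μ : Measure α} {ν : Measure β}
    [SFinite μ] [SFinite ν] {s : Set (α × β)} (hs : MeasurableSet s) {f : α × β → E}
    (hf : IntegrableOn f s (μ.prod ν)) :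
    ∫ p in s, f p ∂μ.prod ν = ∫ x, ∫ y in Prod.mk x ⁻¹' s, f (x, y) ∂ν ∂μ := by
  rw [← integral_indicator hs, integral_prod _ ((integrable_indicator_iff hs).2 hf)]
  congr 1 with x
  rw [← integral_indicator (measurable_prodMk_left hs)]
  rfl

theorem norm_intervalIntegral_exp_I_mul_le {d : ℝ} (hd : d ≠ 0) (a b : ℝ) :
    ‖∫ y in a..b, cexp (I * (d * y : ℝ))‖ ≤ 2 / |d| := by
  have hId : I * d ≠ 0 := mul_ne_zero I_ne_zero (ofReal_ne_zero.2 hd)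
  simp_rw [ofReal_mul, ← mul_assoc]
  rw [integral_exp_mul_complex hId, norm_div, norm_mul, norm_I, one_mul, norm_real, Real.norm_eq_abs]
  gcongr
  calc ‖cexp (I * d * b) - cexp (I * d * a)‖ ≤ ‖cexp (I * d * b)‖ + ‖cexp (I * d * a)‖ :=
        norm_sub_le _ _
    _ = 2 := by
        simp_rw [mul_assoc, ← ofReal_mul, norm_exp_I_mul_ofReal]
        norm_num

/-- Stated in coordinates rather than as a `Metric.closedBall`, since the norm on `ℝ × ℝ` is the
sup norm. -/
def unitDisk : Set (ℝ × ℝ) := {p | p.1 ^ 2 + p.2 ^ 2 ≤ 1}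

theorem isCompact_unitDisk : IsCompact unitDisk := by
  refine Metric.isCompact_of_isClosed_isBounded (isClosed_le (by fun_prop) continuous_const)
    ((Metric.isBounded_closedBall (x := (0 : ℝ × ℝ)) (r := 1)).subset ?_)
  intro p (hp : p.1 ^ 2 + p.2 ^ 2 ≤ 1)
  rw [mem_closedBall_zero_iff, Prod.norm_def, max_le_iff, Real.norm_eq_abs, Real.norm_eq_abs,
    ← sq_le_one_iff_abs_le_one, ← sq_le_one_iff_abs_le_one]
  constructor <;> nlinarith [sq_nonneg p.1, sq_nonneg p.2]

theorem measurableSet_unitDisk : MeasurableSet unitDisk :=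
  isCompact_unitDisk.isClosed.measurableSet

theorem preimage_swap_unitDisk : Prod.swap ⁻¹' unitDisk = unitDisk := by
  ext p
  simp only [unitDisk, mem_preimage, mem_ofPred_eq, Prod.fst_swap, Prod.snd_swap, add_comm]

theorem prodMk_preimage_unitDisk_of_mem {x : ℝ} (hx : x ∈ Icc (-1) 1) :
    Prod.mk x ⁻¹' unitDisk = Icc (-√(1 - x ^ 2)) √(1 - x ^ 2) := by
  have hx2 : x ^ 2 ≤ 1 := (sq_le_one_iff_abs_le_one x).2 (abs_le.2 hx)
  ext y
  rw [mem_Icc, ← Real.sq_le (by linarith)]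
  simp only [unitDisk, mem_preimage, mem_ofPred_eq]
  constructor <;> intro <;> linarith

theorem prodMk_preimage_unitDisk_of_notMem {x : ℝ} (hx : x ∉ Icc (-1) 1) :
    Prod.mk x ⁻¹' unitDisk = ∅ := by
  have hx2 : 1 < x ^ 2 := by
    rw [← not_le, sq_le_one_iff_abs_le_one, abs_le]
    exact hx
  ext y
  simp only [unitDisk, mem_preimage, mem_ofPred_eq, mem_empty_iff_false, iff_false, not_le]
  nlinarith [sq_nonneg y]

theorem norm_setIntegral_prodMk_preimage_unitDisk_le (c x : ℝ) {d : ℝ} (hd : d ≠ 0) :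
    ‖∫ y in Prod.mk x ⁻¹' unitDisk, cexp (I * (c * x + d * y : ℝ))‖ ≤
      (Icc (-1) 1).indicator (fun _ => 2 / |d|) x := by
  by_cases hx : x ∈ Icc (-1) 1
  · have hsplit : ∀ y : ℝ, cexp (I * (c * x + d * y : ℝ)) =
        cexp (I * (c * x : ℝ)) * cexp (I * (d * y : ℝ)) := fun y => by
      rw [← Complex.exp_add]; push_cast; ring_nf
    rw [indicator_of_mem hx, prodMk_preimage_unitDisk_of_mem hx, integral_Icc_eq_integral_Ioc,
      ← intervalIntegral.integral_of_le (neg_le_self (Real.sqrt_nonneg _))]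
    simp_rw [hsplit]
    rw [intervalIntegral.integral_const_mul, norm_mul, norm_exp_I_mul_ofReal, one_mul]
    exact norm_intervalIntegral_exp_I_mul_le hd _ _
  · simp [prodMk_preimage_unitDisk_of_notMem hx, hx]

theorem norm_setIntegral_unitDisk_exp_le_snd (c : ℝ) {d : ℝ} (hd : d ≠ 0) :
    ‖∫ p in unitDisk, cexp (I * (c * p.1 + d * p.2 : ℝ))‖ ≤ 4 / |d| := by
  have hint : IntegrableOn (fun p : ℝ × ℝ => cexp (I * (c * p.1 + d * p.2 : ℝ))) unitDisk
      (volume.prod volume) :=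
    (by fun_prop : Continuous _).continuousOn.integrableOn_compact isCompact_unitDisk
  rw [Measure.volume_eq_prod, setIntegral_prod_eq_integral_setIntegral_preimage
    measurableSet_unitDisk hint]
  calc _ ≤ ∫ x, (Icc (-1 : ℝ) 1).indicator (fun _ => 2 / |d|) x :=
        norm_integral_le_of_norm_le ((integrable_indicator_iff measurableSet_Icc).2
          (integrableOn_const (by simp)))
          (.of_forall fun x => norm_setIntegral_prodMk_preimage_unitDisk_le c x hd)
    _ = 4 / |d| := by
        rw [integral_indicator_const _ measurableSet_Icc, Real.volume_real_Icc_of_le (by norm_num),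
          smul_eq_mul]
        ring

theorem setIntegral_unitDisk_comp_swap {E : Type*} [NormedAddCommGroup E] [NormedSpace ℝ E]
    (f : ℝ × ℝ → E) : ∫ p in unitDisk, f p.swap = ∫ p in unitDisk, f p := by
  have h := (Measure.measurePreserving_swap (μ := (volume : Measure ℝ)) (ν := volume)
    ).setIntegral_preimage_emb MeasurableEquiv.prodComm.measurableEmbedding f unitDisk
  rwa [preimage_swap_unitDisk, ← Measure.volume_eq_prod] at h

theorem norm_setIntegral_unitDisk_exp_le_fst {c : ℝ} (hc : c ≠ 0) (d : ℝ) :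
    ‖∫ p in unitDisk, cexp (I * (c * p.1 + d * p.2 : ℝ))‖ ≤ 4 / |c| := by
  rw [← setIntegral_unitDisk_comp_swap]
  simpa only [Prod.fst_swap, Prod.snd_swap, add_comm] using
    norm_setIntegral_unitDisk_exp_le_snd d hc

theorem setIntegral_closedBall_eq_setIntegral_unitDisk {E : Type*} [NormedAddCommGroup E]
    [NormedSpace ℝ E] (f : ℝ × ℝ → E) :
    ∫ x in Metric.closedBall (0 : EuclideanSpace ℝ (Fin 2)) 1, f (x 0, x 1) =
      ∫ p in unitDisk, f p := by
  let e := (MeasurableEquiv.toLp 2 (Fin 2 → ℝ)).symm.trans MeasurableEquiv.finTwoArrow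
  have he : MeasurePreserving e :=
    (volume_preserving_finTwoArrow ℝ).comp
      (EuclideanSpace.volume_preserving_symm_measurableEquiv_toLp (Fin 2))
  have hpre : e ⁻¹' unitDisk = Metric.closedBall 0 1 := by
    ext x
    simp [unitDisk, e, EuclideanSpace.norm_eq, Fin.sum_univ_two]
  rw [← he.setIntegral_preimage_emb e.measurableEmbedding, hpre]
  rfl

theorem charFunDisk_eq_setIntegral_unitDisk (θ : EuclideanSpace ℝ (Fin 2)) :
    charFunDisk θ = Real.pi⁻¹ • ∫ p in unitDisk, cexp (I * (θ 0 * p.1 + θ 1 * p.2 : ℝ)) := by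
  rw [charFunDisk, unifDisk, integral_smul_measure, ENNReal.toReal_inv,
    ENNReal.toReal_ofReal Real.pi_pos.le,
    setIntegral_closedBall_eq_setIntegral_unitDisk fun p => cexp (I * (θ 0 * p.1 + θ 1 * p.2 : ℝ))]

theorem charFunDisk_decay_bound (θ : EuclideanSpace ℝ (Fin 2))
    (h1 : θ 0 ≠ 0) (h2 : θ 1 ≠ 0) :
    ‖charFunDisk θ‖ ≤ (4 / Real.pi) * min (1 / |θ 0|) (1 / |θ 1|) := by
  rw [charFunDisk_eq_setIntegral_unitDisk, norm_smul, norm_inv, Real.norm_of_nonneg Real.pi_pos.le,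
    mul_min_of_nonneg _ _ (by positivity)]
  refine le_min ?_ ?_
  · calc _ ≤ Real.pi⁻¹ * (4 / |θ 0|) := by
          gcongr; exact norm_setIntegral_unitDisk_exp_le_fst h1 _
      _ = _ := by ring
  · calc _ ≤ Real.pi⁻¹ * (4 / |θ 1|) := by
          gcongr; exact norm_setIntegral_unitDisk_exp_le_snd _ h2
      _ = _ := by ring
end

section
/- Let X be uniform on the unit disk in R^2 with characteristic function φ, let Q(θ) = E[(X·θ)²] = |θ|²/4, and define ψ(θ) = 1/(1-φ(θ)) - 2/Q(θ) for θ ≠ 0. Then ψ(θ) → 1/3 as θ → 0, i.e., ψ extends continuously to 0 with value 1/3. -/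
open MeasureTheory Filter

open Real Set Metric Asymptotics
open scoped Topology InnerProductSpace

/-!
Rotation invariance of the disk turns `φ(θ)` into `E[exp(i ‖θ‖ X₁)]`. In polar coordinates
`E[X₁ᵏ] = (∫_{-π}^{π} cos^k) / (π (k + 2))`, so `E[X₁²] = 1/4`, `E[X₁⁴] = 1/8` and the odd moments
vanish; the Taylor expansion of the exponential to order six then gives
`1 - φ(θ) = ‖θ‖²/8 - ‖θ‖⁴/192 + O(‖θ‖⁶)`. Inverting, `u = a t² - b t⁴ + o(t⁴)` forces
`u⁻¹ - (a t²)⁻¹ → b / a²`, and here `b / a² = (1/192) / (1/8)² = 1/3`.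
-/

section
variable {E F G : Type*} [NormedAddCommGroup E] [InnerProductSpace ℝ E] [FiniteDimensional ℝ E]
  [MeasurableSpace E] [BorelSpace E] [NormedAddCommGroup F] [InnerProductSpace ℝ F]
  [FiniteDimensional ℝ F] [MeasurableSpace F] [BorelSpace F] [NormedAddCommGroup G]
  [NormedSpace ℝ G]

theorem LinearIsometryEquiv.setIntegral_closedBall_comp (e : E ≃ₗᵢ[ℝ] F) (f : F → G) (r : ℝ) :
    ∫ x in closedBall 0 r, f (e x) = ∫ y in closedBall 0 r, f y := by
  have : e ⁻¹' closedBall 0 r = closedBall 0 r := by ext; simp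
  rw [← e.measurePreserving.setIntegral_preimage_emb e.toMeasurableEquiv.measurableEmbedding, this]

theorem setIntegral_closedBall_inner_comp_of_norm_eq (f : ℝ → G) {v w : E} (h : ‖v‖ = ‖w‖)
    (r : ℝ) : ∫ x in closedBall 0 r, f ⟪v, x⟫_ℝ = ∫ x in closedBall 0 r, f ⟪w, x⟫_ℝ := by
  -- the reflection in `(v - w)ᗮ` is a linear isometry swapping `v` and `w`
  set R := (ℝ ∙ (v - w))ᗮ.reflection
  have hR : ∀ x, ⟪w, x⟫_ℝ = ⟪v, R x⟫_ℝ := fun x => by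
    rw [← Submodule.reflection_sub h, ← R.inner_map_map, Submodule.reflection_reflection]
  simp_rw [hR]
  exact (R.setIntegral_closedBall_comp (fun y => f ⟪v, y⟫_ℝ) r).symm

end

theorem setIntegral_closedBall_re_pow (k : ℕ) :
    ∫ z in closedBall (0 : ℂ) 1, z.re ^ k = (∫ α in -π..π, cos α ^ k) / (k + 2) := by
  have polar : ∀ p ∈ polarCoord.target,
      p.1 • (closedBall (0 : ℂ) 1).indicator (fun z : ℂ => z.re ^ k) (Complex.polarCoord.symm p) =
        (Ioc 0 1).indicator (· ^ (k + 1)) p.1 * cos p.2 ^ k := by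
    rintro ⟨r, α⟩ ⟨hr, -⟩
    have hr : 0 < r := hr
    by_cases h : r ≤ 1
    · simp [indicator, hr, h, abs_of_pos hr, pow_succ, Complex.cos_ofReal_re]
      ring
    · simp [indicator, hr, h, abs_of_pos hr]
  rw [← integral_indicator measurableSet_closedBall, ← Complex.integral_comp_polarCoord_symm,
    setIntegral_congr_fun polarCoord.open_target.measurableSet polar, polarCoord_target,
    Measure.volume_eq_prod, ← Measure.prod_restrict,
    integral_prod_mul (fun r => (Ioc 0 1).indicator (· ^ (k + 1)) r) (fun α => cos α ^ k),
    setIntegral_indicator measurableSet_Ioc, inter_eq_right.2 Ioc_subset_Ioi_self,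
    ← intervalIntegral.integral_of_le zero_le_one, integral_pow,
    intervalIntegral.integral_of_le (by linarith [pi_pos]), integral_Ioc_eq_integral_Ioo]
  field_simp
  push_cast
  ring

theorem integral_cos_pow_add_two_neg_pi_pi (n : ℕ) :
    ∫ α in -π..π, cos α ^ (n + 2) = (n + 1) / (n + 2) * ∫ α in -π..π, cos α ^ n := by
  simp [integral_cos_pow]

theorem norm_integral_cexp_sub_sum_le {α : Type*} [MeasurableSpace α] {μ : Measure α}
    [IsFiniteMeasure μ] {f : α → ℝ} (hf : AEStronglyMeasurable f μ) {r : ℝ} {n : ℕ}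
    (hfr : ∀ᵐ x ∂μ, |f x| ≤ r) (hr : 2 * r ≤ n + 1) :
    ‖∫ x, Complex.exp (Complex.I * f x) ∂μ -
        ∑ m ∈ Finset.range n, Complex.I ^ m / m.factorial * ∫ x, (f x : ℂ) ^ m ∂μ‖ ≤
      r ^ n / n.factorial * 2 * μ.real univ := by
  have hF : AEStronglyMeasurable (fun x => (f x : ℂ)) μ :=
    Complex.continuous_ofReal.comp_aestronglyMeasurable hf
  have hpow (m : ℕ) : Integrable (fun x => (f x : ℂ) ^ m) μ := by
    refine Integrable.of_bound (hF.pow m) (r ^ m) ?_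
    filter_upwards [hfr] with x hx
    simpa using pow_le_pow_left₀ (abs_nonneg _) hx m
  have hexp : Integrable (fun x => Complex.exp (Complex.I * f x)) μ := by
    refine Integrable.of_bound ?_ 1 (.of_forall fun x => by simp)
    exact Complex.continuous_exp.comp_aestronglyMeasurable (hF.const_mul _)
  simp_rw [← integral_const_mul]
  rw [← integral_finsetSum _ fun m _ => (hpow m).const_mul _,
    ← integral_sub hexp (integrable_finsetSum _ fun m _ => (hpow m).const_mul _)]
  refine norm_integral_le_of_norm_le_const ?_
  filter_upwards [hfr] with x hx
  have hnorm : ‖Complex.I * f x‖ = |f x| := by simp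
  have hsmall : ‖Complex.I * f x‖ / n.succ ≤ 1 / 2 := by
    rw [hnorm, div_le_iff₀ (by positivity)]
    push_cast
    linarith
  calc _ = ‖Complex.exp (Complex.I * f x) -
        ∑ m ∈ Finset.range n, (Complex.I * f x) ^ m / m.factorial‖ := by
        simp_rw [mul_pow, mul_div_right_comm]
    _ ≤ |f x| ^ n / n.factorial * 2 := hnorm ▸ Complex.exp_bound' hsmall
    _ ≤ r ^ n / n.factorial * 2 := by gcongr

theorem tendsto_inv_sub_inv_of_isLittleO {α 𝕜 : Type*} [NormedField 𝕜] {l : Filter α}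
    {u t : α → 𝕜} {a b : 𝕜} (ha : a ≠ 0) (ht : Tendsto t l (𝓝 0)) (ht0 : ∀ᶠ x in l, t x ≠ 0)
    (hu : (fun x => u x - (a * t x ^ 2 - b * t x ^ 4)) =o[l] fun x => t x ^ 4) :
    Tendsto (fun x => (u x)⁻¹ - (a * t x ^ 2)⁻¹) l (𝓝 (b / a ^ 2)) := by
  have hE := hu.tendsto_div_nhds_zero
  have hD : Tendsto (fun x => u x / t x ^ 2) l (𝓝 a) := by
    have := (tendsto_const_nhds (x := a)).sub ((ht.pow 2).const_mul b) |>.add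
      (hE.mul (ht.pow 2))
    rw [zero_pow two_ne_zero, mul_zero, mul_zero, sub_zero, add_zero] at this
    refine this.congr' ?_
    filter_upwards [ht0] with x hx
    field_simp
    ring
  have hN : Tendsto (fun x => (a * t x ^ 2 - u x) / t x ^ 4) l (𝓝 b) := by
    have := (tendsto_const_nhds (x := b)).sub hE
    rw [sub_zero] at this
    refine this.congr' ?_
    filter_upwards [ht0] with x hx
    field_simp
    ring
  have hlim := hN.div (hD.const_mul a) (mul_ne_zero ha ha)
  rw [← sq] at hlim
  refine hlim.congr' ?_
  filter_upwards [ht0, hD.eventually_ne ha] with x hx hux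
  have hu0 : u x ≠ 0 := fun h => hux (by simp [h])
  simp only [Pi.div_apply]
  field_simp

theorem integral_unifDisk {G : Type*} [NormedAddCommGroup G] [NormedSpace ℝ G]
    (f : EuclideanSpace ℝ (Fin 2) → G) :
    ∫ x, f x ∂unifDisk = π⁻¹ • ∫ x in closedBall 0 1, f x := by
  rw [unifDisk, integral_smul_measure, ENNReal.toReal_inv, ENNReal.toReal_ofReal pi_pos.le]

instance : IsProbabilityMeasure unifDisk where
  measure_univ := by
    simp [unifDisk, ENNReal.inv_mul_cancel (ENNReal.ofReal_pos.2 pi_pos).ne' ENNReal.ofReal_ne_top]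

theorem ae_mem_closedBall_unifDisk : ∀ᵐ x ∂unifDisk, x ∈ closedBall 0 1 :=
  Measure.ae_smul_measure (ae_restrict_mem measurableSet_closedBall) _

theorem integral_unifDisk_apply_zero_pow (k : ℕ) :
    ∫ x, x 0 ^ k ∂unifDisk = (∫ α in -π..π, cos α ^ k) / (π * (k + 2)) := by
  rw [integral_unifDisk, mul_comm π, ← div_div, ← setIntegral_closedBall_re_pow,
    ← Complex.orthonormalBasisOneI.repr.symm.setIntegral_closedBall_comp, smul_eq_mul,
    div_eq_inv_mul]
  simp

theorem charFunDisk_eq_integral_norm_mul (θ : EuclideanSpace ℝ (Fin 2)) :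
    charFunDisk θ = ∫ x, Complex.exp (Complex.I * ((‖θ‖ * x 0 : ℝ) : ℂ)) ∂unifDisk := by
  have hθ (x : EuclideanSpace ℝ (Fin 2)) : θ 0 * x 0 + θ 1 * x 1 = ⟪θ, x⟫_ℝ := by
    simp [PiLp.inner_apply, Fin.sum_univ_two, mul_comm]
  have hsingle (x : EuclideanSpace ℝ (Fin 2)) :
      ‖θ‖ * x 0 = ⟪EuclideanSpace.single 0 ‖θ‖, x⟫_ℝ := by
    simp [EuclideanSpace.inner_single_left, mul_comm]
  rw [charFunDisk, integral_unifDisk, integral_unifDisk]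
  simp_rw [hθ, hsingle]
  rw [setIntegral_closedBall_inner_comp_of_norm_eq (fun s => Complex.exp (Complex.I * s))
    (w := EuclideanSpace.single 0 ‖θ‖) (by simp) 1]

theorem isBigO_charFunDisk_sub_taylor :
    (fun θ : EuclideanSpace ℝ (Fin 2) =>
      charFunDisk θ - (1 - (‖θ‖ : ℂ) ^ 2 / 8 + (‖θ‖ : ℂ) ^ 4 / 192)) =O[𝓝 0]
      fun θ => ‖θ‖ ^ 6 := by
  refine .of_bound (2 / Nat.factorial 6) ?_
  filter_upwards [closedBall_mem_nhds (0 : EuclideanSpace ℝ (Fin 2)) one_pos] with θ hθ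
  rw [mem_closedBall_zero_iff] at hθ
  have hbound : ∀ᵐ x ∂unifDisk, |‖θ‖ * x 0| ≤ ‖θ‖ := by
    filter_upwards [ae_mem_closedBall_unifDisk] with x hx
    rw [abs_mul, abs_norm]
    exact mul_le_of_le_one_right (norm_nonneg θ)
      ((PiLp.norm_apply_le x 0).trans (by simpa using hx))
  have htaylor : ∑ m ∈ Finset.range 6, Complex.I ^ m / m.factorial *
      ∫ x, ((‖θ‖ * x 0 : ℝ) : ℂ) ^ m ∂unifDisk = 1 - (‖θ‖ : ℂ) ^ 2 / 8 + (‖θ‖ : ℂ) ^ 4 / 192 := by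
    have h3 := integral_cos_pow_add_two_neg_pi_pi 1
    have h4 := integral_cos_pow_add_two_neg_pi_pi 2
    have h5 := integral_cos_pow_add_two_neg_pi_pi 3
    simp_rw [Finset.sum_range_succ, Finset.sum_range_zero, ← Complex.ofReal_pow,
      integral_complex_ofReal, mul_pow, integral_const_mul, integral_unifDisk_apply_zero_pow]
    norm_num [h3, h4, h5, Nat.factorial]
    have hπ : (π : ℂ) ≠ 0 := Complex.ofReal_ne_zero.2 pi_ne_zero
    field_simp
    ring
  have := norm_integral_cexp_sub_sum_le (n := 6) (by fun_prop) hbound (by norm_num; linarith)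
  rw [charFunDisk_eq_integral_norm_mul, ← htaylor, norm_pow, norm_norm]
  refine this.trans_eq ?_
  norm_num [probReal_univ, Nat.factorial]
  ring

/-- `ψ(θ) = 1/(1-φ(θ)) - 2/Q(θ)` where `Q(θ) = E[(X·θ)²] = ‖θ‖²/4`,
so `2/Q(θ) = 8/‖θ‖²`.  As `θ → 0` (with `θ ≠ 0`), `ψ(θ) → 1/3`. -/
theorem charFunDisk_psi_tendsto :
    Tendsto (fun θ : EuclideanSpace ℝ (Fin 2) =>
        (1 - charFunDisk θ)⁻¹ - ((2 / (‖θ‖ ^ 2 / 4) : ℝ) : ℂ))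
      (nhdsWithin 0 {0}ᶜ) (nhds ((1 : ℂ) / 3)) := by
  have ht : Tendsto (fun θ : EuclideanSpace ℝ (Fin 2) => (‖θ‖ : ℂ)) (𝓝[≠] 0) (𝓝 0) :=
    (Complex.continuous_ofReal.comp continuous_norm).tendsto' 0 0 (by simp) |>.mono_left
      nhdsWithin_le_nhds
  have ht0 : ∀ᶠ θ : EuclideanSpace ℝ (Fin 2) in 𝓝[≠] 0, (‖θ‖ : ℂ) ≠ 0 := by
    filter_upwards [self_mem_nhdsWithin] with θ hθ
    simpa using hθ
  have hu : (fun θ : EuclideanSpace ℝ (Fin 2) => (1 - charFunDisk θ) -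
      (1 / 8 * (‖θ‖ : ℂ) ^ 2 - 1 / 192 * (‖θ‖ : ℂ) ^ 4)) =o[𝓝[≠] 0] fun θ => (‖θ‖ : ℂ) ^ 4 := by
    refine (isBigO_charFunDisk_sub_taylor.mono nhdsWithin_le_nhds).neg_left.congr_left
      (fun θ => by ring) |>.trans_isLittleO ?_
    refine isLittleO_norm_right.mp ?_
    simpa using (isLittleO_norm_pow_norm_pow (E' := EuclideanSpace ℝ (Fin 2))
      (by norm_num : 4 < 6)).mono nhdsWithin_le_nhds
  convert tendsto_inv_sub_inv_of_isLittleO (by norm_num) ht ht0 hu using 2 with θ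
  · push_cast
    ring
  · norm_num
end
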